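/- Fix L : ℕ, a finite type C and a finite dimension type d. Let a, b : C → Bool, and for c : C define f_c : K × K → K × K by f_c(k_A, k_B) = (if a c then k_A else ⊥, if b c then k_B else ⊥). Define U on families ρ : K × K × C → Matrix d d ℂ by (U ρ)(k_A, k_B, c) = ∑ over pairs (k'_A, k'_B) with f_c(k'_A, k'_B) = (k_A, k_B) of ρ(k'_A, k'_B, c). Let R denote the ideal map acting per value of c. Then U ∘ R = R ∘ U. -/

import Mathlib

open scoped ComplexOrder

/-- The key alphabet: keys of length `l ≤ L`, i.e. pairs of a length `l : Fin (L+1)`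
and a bitstring of that length. -/
abbrev Key (L : ℕ) := Σ l : Fin (L+1), (Fin (l : ℕ) → Bool)

/-- The length of a key. -/
def lenKey {L : ℕ} (k : Key L) : Fin (L+1) := k.1

/-- The unique key of length `0` (the abort symbol `⊥`). -/
def botKey (L : ℕ) : Key L := ⟨0, fun _ => false⟩

/-- The ideal-key weight `w(k_A, k_B)`: `2^(-len k_A)` if the lengths agree and
`k_A = k_B`, `0` if the lengths agree but `k_A ≠ k_B`, and
`2^(-(len k_A + len k_B))` if the lengths differ. -/
noncomputable def idealWt {L : ℕ} (kA kB : Key L) : ℝ :=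
  if lenKey kA = lenKey kB then
    (if kA = kB then (2:ℝ) ^ (-((lenKey kA : ℕ) : ℤ)) else 0)
  else (2:ℝ) ^ (-(((lenKey kA : ℕ) : ℤ) + ((lenKey kB : ℕ) : ℤ)))

/-- The ideal map `R`, acting per value of the additional classical index `c`:
it replaces the key registers by ideal keys, weighting by `idealWt` and summing the
input state over all key pairs with the same pair of lengths. -/
noncomputable def idealMap {L : ℕ} {C d : Type*}
    (ρ : Key L × Key L × C → Matrix d d ℂ) : Key L × Key L × C → Matrix d d ℂ :=
  fun p => idealWt p.1 p.2.1 •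
    ∑ q : Key L × Key L,
      if lenKey q.1 = lenKey p.1 ∧ lenKey q.2 = lenKey p.2.1
        then ρ (q.1, q.2, p.2.2) else 0

/-- The classically controlled key update: conditioned on `c`, each party's key is
either kept (`a c` / `b c` true) or replaced by the abort symbol `⊥`. -/
def keyErase {L : ℕ} {C : Type*} (a b : C → Bool) (c : C)
    (q : Key L × Key L) : Key L × Key L :=
  (if a c then q.1 else botKey L, if b c then q.2 else botKey L)

/-- The update channel `U` implementing the classically controlled key erasure. -/
noncomputable def updateMap {L : ℕ} {C d : Type*} (a b : C → Bool)
    (ρ : Key L × Key L × C → Matrix d d ℂ) : Key L × Key L × C → Matrix d d ℂ :=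
  fun p => ∑ q : Key L × Key L,
    if keyErase a b p.2.2 q = (p.1, p.2.1) then ρ (q.1, q.2, p.2.2) else 0

/-!
At each point `(k, c)` both sides are linear combinations of the values `ρ (r, c)`, so the claim
reduces to an identity of coefficients: for the erasure `f = keyErase a b c`,
`∑_{f q = k, len q = len r} w q = [len (f r) = len k] • w k`.
As `f` keeps or erases each key separately, this follows coordinatewise from the marginal identity
`∑_{len x = l} w x y = w ⊥ y = 2^(-len y)`, valid for every length `l`: the weights that `R`
spreads over one length class add up to the weight of the aborted key.
-/

section RelSum

variable {α R M : Type*} [Fintype α] [Semiring R] [AddCommMonoid M] [Module R M]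

def fiberSum [DecidableEq α] (f : α → α) (σ : α → M) (k : α) : M :=
  ∑ q, if f q = k then σ q else 0

def weightedRelSum (E : α → α → Prop) [DecidableRel E] (w : α → R) (σ : α → M) (k : α) : M :=
  w k • ∑ r, if E r k then σ r else 0

theorem fiberSum_weightedRelSum_comm [DecidableEq α] (f : α → α) (E : α → α → Prop) [DecidableRel E]
    (w : α → R) (σ : α → M)
    (hw : ∀ k r, ∑ q, (if f q = k ∧ E r q then w q else 0) = if E (f r) k then w k else 0) :
    fiberSum f (weightedRelSum E w σ) = weightedRelSum E w (fiberSum f σ) := by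
  funext k
  calc fiberSum f (weightedRelSum E w σ) k
      = ∑ r, (∑ q, if f q = k ∧ E r q then w q else 0) • σ r := by
        simp only [fiberSum, weightedRelSum, Finset.smul_sum, Finset.sum_smul, ite_smul,
          zero_smul, smul_ite, smul_zero, ite_and, Finset.ite_sum_zero]
        rw [Finset.sum_comm]
    _ = ∑ q, if E (f q) k then w k • σ q else 0 := by
        simp only [hw, ite_smul, zero_smul]
    _ = weightedRelSum E w (fiberSum f σ) k := by
        simp only [fiberSum, weightedRelSum, Finset.ite_sum_zero, Finset.smul_sum]
        rw [Finset.sum_comm]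
        simp only [smul_ite, smul_zero, ← ite_and, and_comm (b := f _ = _)]
        simp only [ite_and, Finset.sum_ite_eq, Finset.mem_univ, if_true]

end RelSum

section Keys

variable {L : ℕ}

theorem lenKey_eq_zero_iff {k : Key L} : lenKey k = 0 ↔ k = botKey L := by
  obtain ⟨l, s⟩ := k
  constructor
  · rintro (rfl : l = 0)
    exact Sigma.ext rfl (heq_of_eq (funext fun i => i.elim0))
  · rintro h
    rw [h]
    rfl

theorem sum_ite_lenKey_eq {M : Type*} [AddCommMonoid M] (l : Fin (L + 1)) (F : Key L → M) :
    ∑ k, (if lenKey k = l then F k else 0) = ∑ s : Fin l → Bool, F ⟨l, s⟩ := by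
  rw [Fintype.sum_sigma]
  exact (Finset.sum_eq_single l (fun m _ hm => Finset.sum_eq_zero fun s _ => if_neg hm)
    (by simp)).trans (Finset.sum_congr rfl fun s _ => if_pos rfl)

theorem idealWt_comm (x y : Key L) : idealWt x y = idealWt y x := by
  unfold idealWt
  by_cases h : lenKey x = lenKey y
  · simp only [h, eq_comm (a := x), if_true]
  · rw [if_neg h, if_neg (Ne.symm h), add_comm]

theorem idealWt_botKey_left (y : Key L) :
    idealWt (botKey L) y = (2 : ℝ) ^ (-((lenKey y : ℕ) : ℤ)) := by
  have hbot : lenKey (botKey L) = 0 := rfl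
  unfold idealWt
  split_ifs with hlen hbot'
  · rw [← hbot', hbot]
  · exact absurd (lenKey_eq_zero_iff.mp (hbot ▸ hlen.symm)).symm hbot'
  · simp [hbot]

theorem sum_ite_lenKey_idealWt_left (l : Fin (L + 1)) (y : Key L) :
    ∑ x, (if lenKey x = l then idealWt x y else 0) = idealWt (botKey L) y := by
  rw [sum_ite_lenKey_eq, idealWt_botKey_left]
  obtain ⟨m, t⟩ := y
  by_cases hl : l = m
  · subst hl
    simp [idealWt, lenKey, Finset.sum_ite_eq']
  · have : ∀ s : Fin l → Bool, idealWt ⟨l, s⟩ ⟨m, t⟩ = (2 : ℝ) ^ (-((l : ℕ) + (m : ℕ) : ℤ)) :=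
      fun s => if_neg hl
    simp only [this, Finset.sum_const, Finset.card_univ, Fintype.card_fun, Fintype.card_bool,
      Fintype.card_fin, nsmul_eq_mul, lenKey]
    rw [neg_add, zpow_add₀ two_ne_zero, zpow_neg, zpow_natCast]
    push_cast
    field_simp

theorem sum_ite_lenKey_idealWt_right (l : Fin (L + 1)) (x : Key L) :
    ∑ y, (if lenKey y = l then idealWt x y else 0) = idealWt x (botKey L) := by
  simp only [idealWt_comm x, sum_ite_lenKey_idealWt_left]

theorem sum_ite_erase_eq {M : Type*} [AddCommMonoid M] (t : Bool) (F : Key L → M)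
    (hF : ∀ l, ∑ x, (if lenKey x = l then F x else 0) = F (botKey L)) (k r : Key L) :
    ∑ x, (if (if t then x else botKey L) = k ∧ lenKey r = lenKey x then F x else 0) =
      if lenKey (if t then r else botKey L) = lenKey k then F k else 0 := by
  cases t
  · by_cases hk : botKey L = k
    · subst hk
      simpa [eq_comm] using hF (lenKey r)
    · have hlen : lenKey (botKey L) ≠ lenKey k := fun h =>
        hk (lenKey_eq_zero_iff.mp h.symm).symm
      simp [hk, hlen]
  · simp only [if_true, ite_and, Finset.sum_ite_eq', Finset.mem_univ,
      eq_comm (a := lenKey r)]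

theorem keyErase_fst {C : Type*} (a b : C → Bool) (c : C) (q : Key L × Key L) :
    (keyErase a b c q).1 = if a c then q.1 else botKey L := rfl

theorem keyErase_snd {C : Type*} (a b : C → Bool) (c : C) (q : Key L × Key L) :
    (keyErase a b c q).2 = if b c then q.2 else botKey L := rfl

theorem sum_ite_keyErase_eq {C : Type*} (a b : C → Bool) (c : C) (k r : Key L × Key L) :
    ∑ q, (if keyErase a b c q = k ∧ (lenKey r.1 = lenKey q.1 ∧ lenKey r.2 = lenKey q.2)
      then idealWt q.1 q.2 else 0) =
    if lenKey (keyErase a b c r).1 = lenKey k.1 ∧ lenKey (keyErase a b c r).2 = lenKey k.2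
      then idealWt k.1 k.2 else 0 := by
  obtain ⟨kA, kB⟩ := k
  rw [Fintype.sum_prod_type]
  simp only [Prod.ext_iff, keyErase_fst, keyErase_snd, and_and_and_comm, ite_and (P := _ ∧ _),
    ← Finset.ite_sum_zero]
  simp only [sum_ite_erase_eq (b c) (idealWt _) (sum_ite_lenKey_idealWt_right · _)]
  refine (sum_ite_erase_eq (a c)
    (fun x => if lenKey (if b c then r.2 else botKey L) = lenKey kB then idealWt x kB else 0)
    (fun l => ?_) kA r.1).trans (ite_and ..).symm
  split_ifs <;> simp [sum_ite_lenKey_idealWt_left]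

end Keys

/-- The classically controlled key-erasure update commutes with the ideal map. -/
theorem updateMap_comm_idealMap (L : ℕ) (C d : Type*) (a b : C → Bool)
    (ρ : Key L × Key L × C → Matrix d d ℂ) :
    updateMap a b (idealMap ρ) = idealMap (updateMap a b ρ) := by
  funext ⟨kA, kB, c⟩
  exact congrFun (fiberSum_weightedRelSum_comm (keyErase a b c)
    (fun r q => lenKey r.1 = lenKey q.1 ∧ lenKey r.2 = lenKey q.2) (fun q => idealWt q.1 q.2)
    (fun q => ρ (q.1, q.2, c)) (sum_ite_keyErase_eq a b c)) (kA, kB)
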